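/- There exists a constant c > 0 such that for every integer n ≥ 1, ∫_Ω |Θ_n(t)| dt ≤ c·n. -/

import Mathlib

noncomputable section

open MeasureTheory Filter

/-- The (half-open) regular hexagon `Ω` in the coordinates `(t₁,t₂)` (with `t₃ = -(t₁+t₂)`). -/
def Hex : Set (ℝ × ℝ) :=
  {t | -1 ≤ t.1 ∧ t.1 < 1 ∧ -1 ≤ t.2 ∧ t.2 < 1 ∧ -1 ≤ t.1 + t.2 ∧ t.1 + t.2 < 1}

/-- Third homogeneous coordinate: `t₃ = -(t₁+t₂)`. -/
def t3 (t : ℝ × ℝ) : ℝ := -(t.1 + t.2)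

/-- The function `Θ_n`. -/
def Theta (n : ℕ) (t : ℝ × ℝ) : ℝ :=
  (Real.sin ((n+1) * Real.pi * (t.1 - t.2) / 3) *
   Real.sin ((n+1) * Real.pi * (t.2 - t3 t) / 3) *
   Real.sin ((n+1) * Real.pi * (t3 t - t.1) / 3)) /
  (Real.sin (Real.pi * (t.1 - t.2) / 3) *
   Real.sin (Real.pi * (t.2 - t3 t) / 3) *
   Real.sin (Real.pi * (t3 t - t.1) / 3))

/-!
On the hexagon each factor of `Θ_n` is a ratio `sin (Nπx/3) / sin (πx/3)` with `N = n + 1` and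
`|x| ≤ 2`. It is at most `N` and, by concavity of `sin`, at most `3/|x|`; hence it is at most
`4N (1 + N|x|)⁻¹`. Bounding the smallest of three numbers by the geometric mean of the other two gives
`pqr ≤ (pq)^{3/2} + (qr)^{3/2} + (rp)^{3/2}`, so `|Θ_n|` is dominated by `(4N)^3` times a sum of
products `decay (N ℓ₁ t) * decay (N ℓ₂ t)` with `decay y = (1 + |y|)^{-3/2}` integrable, where
`ℓ₁, ℓ₂` are two of the forms `t₁ - t₂, t₂ - t₃, t₃ - t₁`; any two of them are independent, with
determinant `±3`. A linear change of variables integrates each product over the whole plane to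
`(∫ decay)^2 / (3N^2)`, so `∫_Ω |Θ_n| ≤ 64 N (∫ decay)^2`.
-/

open Real
open scoped ENNReal

theorem abs_sin_nat_mul_le (m : ℕ) (θ : ℝ) : |sin (m * θ)| ≤ m * |sin θ| := by
  induction m with
  | zero => simp
  | succ k ih =>
    rw [Nat.cast_succ, add_one_mul, sin_add]
    calc |sin (k * θ) * cos θ + cos (k * θ) * sin θ|
        ≤ |sin (k * θ)| * |cos θ| + |cos (k * θ)| * |sin θ| := by
          simpa only [abs_mul] using abs_add_le (sin (k * θ) * cos θ) (cos (k * θ) * sin θ)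
      _ ≤ |sin (k * θ)| * 1 + 1 * |sin θ| := by gcongr <;> exact abs_cos_le_one _
      _ ≤ (k + 1) * |sin θ| := by linarith

theorem div_three_le_sin_pi_mul_div_three {x : ℝ} (h₀ : 0 ≤ x) (h₂ : x ≤ 2) :
    x / 3 ≤ sin (π * x / 3) := by
  have h₀' : (0 : ℝ) ∈ Set.Icc 0 π := ⟨le_rfl, pi_pos.le⟩
  have h₂' : 2 * π / 3 ∈ Set.Icc 0 π := ⟨by positivity, by linarith [pi_pos]⟩
  have hchord := strictConcaveOn_sin_Icc.concaveOn.2 h₀' h₂'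
    (show 0 ≤ 1 - x / 2 by linarith) (show 0 ≤ x / 2 by linarith) (by ring)
  have hsin : sin (2 * π / 3) = √3 / 2 := by
    rw [show 2 * π / 3 = π - π / 3 by ring, sin_pi_sub, sin_pi_div_three]
  have hsqrt : 4 / 3 ≤ √3 := le_sqrt_of_sq_le (by norm_num)
  simp only [smul_eq_mul, sin_zero, mul_zero, zero_add, hsin] at hchord
  rw [show x / 2 * (2 * π / 3) = π * x / 3 by ring] at hchord
  nlinarith

theorem abs_le_three_mul_abs_sin {x : ℝ} (hx : |x| ≤ 2) : |x| ≤ 3 * |sin (π * x / 3)| := by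
  have hsin : sin (π * |x| / 3) ≤ |sin (π * x / 3)| := by
    rcases abs_cases x with ⟨h, _⟩ | ⟨h, _⟩ <;> rw [h]
    · exact le_abs_self _
    · rw [mul_neg, neg_div, sin_neg]
      exact neg_le_abs _
  linarith [div_three_le_sin_pi_mul_div_three (abs_nonneg x) hx]

theorem abs_sin_nat_mul_le_of_abs_le_two (m : ℕ) {x : ℝ} (hx : |x| ≤ 2) :
    |sin (m * (π * x / 3))| ≤ 4 * m * (1 + |m * x|)⁻¹ * |sin (π * x / 3)| := by
  have h₁ := abs_sin_nat_mul_le m (π * x / 3)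
  have h₂ := abs_le_three_mul_abs_sin hx
  have h₃ : |x| * |sin (m * (π * x / 3))| ≤ |x| :=
    mul_le_of_le_one_right (abs_nonneg x) (abs_sin_le_one _)
  rw [abs_mul, Nat.abs_cast, mul_right_comm, ← div_eq_mul_inv, le_div_iff₀ (by positivity)]
  nlinarith [mul_le_mul_of_nonneg_left h₃ (Nat.cast_nonneg (α := ℝ) m),
    mul_le_mul_of_nonneg_left h₂ (Nat.cast_nonneg (α := ℝ) m)]

theorem rpow_three_halves_eq {p : ℝ} (hp : 0 ≤ p) : p ^ (3 / 2 : ℝ) = p * √p := by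
  rw [sqrt_eq_rpow, ← rpow_one_add' hp (by norm_num)]
  norm_num

theorem mul_mul_le_rpow_mul_rpow {p q r : ℝ} (hp : 0 ≤ p) (hq : 0 ≤ q) (hr : 0 ≤ r)
    (hrp : r ≤ p) (hrq : r ≤ q) : p * q * r ≤ p ^ (3 / 2 : ℝ) * q ^ (3 / 2 : ℝ) := by
  have hsqrt : r ≤ √p * √q :=
    calc r = √r * √r := (mul_self_sqrt hr).symm
      _ ≤ √p * √q := by gcongr
  rw [rpow_three_halves_eq hp, rpow_three_halves_eq hq]
  calc p * q * r ≤ p * q * (√p * √q) := by gcongr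
    _ = p * √p * (q * √q) := by ring

theorem mul_mul_le_sum_rpow_mul_rpow {p q r : ℝ} (hp : 0 ≤ p) (hq : 0 ≤ q) (hr : 0 ≤ r) :
    p * q * r ≤ p ^ (3 / 2 : ℝ) * q ^ (3 / 2 : ℝ) + q ^ (3 / 2 : ℝ) * r ^ (3 / 2 : ℝ) +
      r ^ (3 / 2 : ℝ) * p ^ (3 / 2 : ℝ) := by
  have hpq : 0 ≤ p ^ (3 / 2 : ℝ) * q ^ (3 / 2 : ℝ) := by positivity
  have hqr : 0 ≤ q ^ (3 / 2 : ℝ) * r ^ (3 / 2 : ℝ) := by positivity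
  have hrp : 0 ≤ r ^ (3 / 2 : ℝ) * p ^ (3 / 2 : ℝ) := by positivity
  obtain ⟨h₁, h₂⟩ | ⟨h₁, h₂⟩ | ⟨h₁, h₂⟩ :
      (r ≤ p ∧ r ≤ q) ∨ (p ≤ q ∧ p ≤ r) ∨ (q ≤ r ∧ q ≤ p) := by
    rcases le_total r p with h | h <;> rcases le_total r q with h' | h' <;>
      rcases le_total p q with h'' | h'' <;> grind
  · linarith [mul_mul_le_rpow_mul_rpow hp hq hr h₁ h₂]
  · linarith [mul_mul_le_rpow_mul_rpow hq hr hp h₁ h₂]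
  · linarith [mul_mul_le_rpow_mul_rpow hr hp hq h₁ h₂]

def decay (y : ℝ) : ℝ := (1 + |y|)⁻¹ ^ (3 / 2 : ℝ)

theorem decay_nonneg (y : ℝ) : 0 ≤ decay y := by unfold decay; positivity

@[fun_prop]
theorem continuous_decay : Continuous decay := by
  unfold decay
  exact ((continuous_const.add continuous_abs).inv₀ fun y => (by positivity : (1 : ℝ) + |y| ≠ 0))
    |>.rpow_const fun _ => Or.inr (by norm_num)

theorem integrable_decay : Integrable decay := by
  refine (integrable_one_add_norm (E := ℝ) (μ := volume) (r := 3 / 2) (by norm_num)).congr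
    (ae_of_all _ fun y => ?_)
  simp only [decay, norm_eq_abs]
  rw [rpow_neg (by positivity), inv_rpow (by positivity)]

theorem integral_decay_pos : 0 < ∫ y, decay y :=
  integral_pos_of_integrable_nonneg_nonzero (x := 0) continuous_decay integrable_decay decay_nonneg
    (by simp [decay])

theorem lintegral_comp_linear_mul_comp_linear {f g : ℝ → ℝ≥0∞} (hf : Measurable f)
    (hg : Measurable g) {a b c d : ℝ} (hdet : a * d - b * c ≠ 0) :
    ∫⁻ t : ℝ × ℝ, f (a * t.1 + b * t.2) * g (c * t.1 + d * t.2) =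
      ENNReal.ofReal |(a * d - b * c)⁻¹| * ((∫⁻ x, f x) * ∫⁻ y, g y) := by
  set L := Matrix.toLin (Module.Basis.finTwoProd ℝ) (Module.Basis.finTwoProd ℝ) !![a, b; c, d]
  have hL : LinearMap.det L = a * d - b * c := by rw [LinearMap.det_toLin, Matrix.det_fin_two_of]
  calc ∫⁻ t : ℝ × ℝ, f (a * t.1 + b * t.2) * g (c * t.1 + d * t.2)
      = ∫⁻ t, (fun u : ℝ × ℝ => f u.1 * g u.2) (L t) := by
        simp only [L, Matrix.toLin_finTwoProd_apply]
    _ = ∫⁻ u, f u.1 * g u.2 ∂(Measure.map L volume) :=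
        (lintegral_map ((hf.comp measurable_fst).mul (hg.comp measurable_snd))
          L.continuous_of_finiteDimensional.measurable).symm
    _ = _ := by
        rw [Measure.map_linearMap_addHaar_eq_smul_addHaar volume (hL ▸ hdet),
          lintegral_smul_measure, hL, Measure.volume_eq_prod,
          lintegral_prod_mul hf.aemeasurable hg.aemeasurable, smul_eq_mul]

theorem lintegral_decay_mul_decay {N : ℝ} (hN : N ≠ 0) {ℓ₁ ℓ₂ : ℝ × ℝ → ℝ} {a b c d : ℝ}
    (h₁ : ∀ t, ℓ₁ t = a * t.1 + b * t.2) (h₂ : ∀ t, ℓ₂ t = c * t.1 + d * t.2)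
    (hdet : a * d - b * c ≠ 0) :
    ∫⁻ t, ENNReal.ofReal (decay (N * ℓ₁ t) * decay (N * ℓ₂ t)) =
      ENNReal.ofReal ((∫ y, decay y) ^ 2 / (N ^ 2 * |a * d - b * c|)) := by
  have hK : ENNReal.ofReal (∫ y, decay y) = ∫⁻ y, ENNReal.ofReal (decay y) :=
    ofReal_integral_eq_lintegral_ofReal integrable_decay (ae_of_all _ decay_nonneg)
  have hm : Measurable fun y => ENNReal.ofReal (decay y) := by fun_prop
  have hdet' : N * a * (N * d) - N * b * (N * c) = N ^ 2 * (a * d - b * c) := by ring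
  calc ∫⁻ t, ENNReal.ofReal (decay (N * ℓ₁ t) * decay (N * ℓ₂ t))
      = ∫⁻ t : ℝ × ℝ, ENNReal.ofReal (decay (N * a * t.1 + N * b * t.2)) *
          ENNReal.ofReal (decay (N * c * t.1 + N * d * t.2)) :=
        lintegral_congr fun t => by rw [h₁, h₂, ENNReal.ofReal_mul (decay_nonneg _)]; ring_nf
    _ = ENNReal.ofReal |(N ^ 2 * (a * d - b * c))⁻¹| *
          (ENNReal.ofReal (∫ y, decay y) * ENNReal.ofReal (∫ y, decay y)) := by
        rw [lintegral_comp_linear_mul_comp_linear hm hm (hdet' ▸ by positivity), hdet', hK]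
    _ = _ := by
        rw [← ENNReal.ofReal_mul integral_decay_pos.le, ← ENNReal.ofReal_mul (abs_nonneg _),
          abs_inv, abs_mul, abs_of_nonneg (sq_nonneg N)]
        ring_nf

@[fun_prop]
theorem continuous_t3 : Continuous t3 := by
  unfold t3
  fun_prop

theorem measurable_Theta (n : ℕ) : Measurable (Theta n) := by
  unfold Theta
  fun_prop

def thetaMajorant (N : ℝ) (t : ℝ × ℝ) : ℝ :=
  decay (N * (t.1 - t.2)) * decay (N * (t.2 - t3 t)) +
    decay (N * (t.2 - t3 t)) * decay (N * (t3 t - t.1)) +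
    decay (N * (t3 t - t.1)) * decay (N * (t.1 - t.2))

theorem abs_Theta_le (n : ℕ) {t : ℝ × ℝ} (ht : t ∈ Hex) :
    |Theta n t| ≤ (4 * (n + 1)) ^ 3 * thetaMajorant (n + 1) t := by
  obtain ⟨h₁, h₂, h₃, h₄, h₅, h₆⟩ := ht
  have factor : ∀ x : ℝ, |x| ≤ 2 → |sin ((n + 1) * π * x / 3)| ≤
      4 * (n + 1) * (1 + |(n + 1) * x|)⁻¹ * |sin (π * x / 3)| := by
    intro x hx
    have := abs_sin_nat_mul_le_of_abs_le_two (n + 1) hx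
    push_cast at this
    rwa [mul_assoc _ π, mul_div_assoc]
  have ha : |t.1 - t.2| ≤ 2 := abs_le.2 ⟨by linarith, by linarith⟩
  have hb : |t.2 - t3 t| ≤ 2 := abs_le.2 ⟨by unfold t3; linarith, by unfold t3; linarith⟩
  have hc : |t3 t - t.1| ≤ 2 := abs_le.2 ⟨by unfold t3; linarith, by unfold t3; linarith⟩
  set u : ℝ → ℝ := fun x => (1 + |(n + 1) * x|)⁻¹
  have hu : ∀ x, 0 ≤ u x := fun x => by positivity
  calc |Theta n t|
      ≤ 4 * (n + 1) * u (t.1 - t.2) * (4 * (n + 1) * u (t.2 - t3 t)) *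
          (4 * (n + 1) * u (t3 t - t.1)) := by
        rw [Theta, abs_div]
        refine div_le_of_le_mul₀ (abs_nonneg _) (by positivity) ?_
        simp only [abs_mul]
        calc _ ≤ 4 * (n + 1) * u (t.1 - t.2) * |sin (π * (t.1 - t.2) / 3)| *
                (4 * (n + 1) * u (t.2 - t3 t) * |sin (π * (t.2 - t3 t) / 3)|) *
                (4 * (n + 1) * u (t3 t - t.1) * |sin (π * (t3 t - t.1) / 3)|) := by
              gcongr
              exacts [factor _ ha, factor _ hb, factor _ hc]
          _ = _ := by ring
    _ = (4 * (n + 1)) ^ 3 * (u (t.1 - t.2) * u (t.2 - t3 t) * u (t3 t - t.1)) := by ring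
    _ ≤ _ := by
        gcongr
        exact mul_mul_le_sum_rpow_mul_rpow (hu _) (hu _) (hu _)

theorem lintegral_thetaMajorant_le {N : ℝ} (hN : N ≠ 0) :
    ∫⁻ t, ENNReal.ofReal (thetaMajorant N t) ≤ ENNReal.ofReal ((∫ y, decay y) ^ 2 / N ^ 2) := by
  have h₁ := lintegral_decay_mul_decay hN (ℓ₁ := fun t => t.1 - t.2) (ℓ₂ := fun t => t.2 - t3 t)
    (a := 1) (b := -1) (c := 1) (d := 2) (fun t => by ring) (fun t => by simp only [t3]; ring)
    (by norm_num)
  have h₂ := lintegral_decay_mul_decay hN (ℓ₁ := fun t => t.2 - t3 t) (ℓ₂ := fun t => t3 t - t.1)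
    (a := 1) (b := 2) (c := -2) (d := -1) (fun t => by simp only [t3]; ring)
    (fun t => by simp only [t3]; ring) (by norm_num)
  have h₃ := lintegral_decay_mul_decay hN (ℓ₁ := fun t => t3 t - t.1) (ℓ₂ := fun t => t.1 - t.2)
    (a := -2) (b := -1) (c := 1) (d := -1) (fun t => by simp only [t3]; ring) (fun t => by ring)
    (by norm_num)
  set K := ∫ y, decay y
  calc ∫⁻ t, ENNReal.ofReal (thetaMajorant N t)
      ≤ ∫⁻ t, ENNReal.ofReal (decay (N * (t.1 - t.2)) * decay (N * (t.2 - t3 t))) +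
          ENNReal.ofReal (decay (N * (t.2 - t3 t)) * decay (N * (t3 t - t.1))) +
          ENNReal.ofReal (decay (N * (t3 t - t.1)) * decay (N * (t.1 - t.2))) :=
        lintegral_mono fun t => ENNReal.ofReal_add_le.trans (add_le_add ENNReal.ofReal_add_le le_rfl)
    _ = ENNReal.ofReal (K ^ 2 / (N ^ 2 * 3)) + ENNReal.ofReal (K ^ 2 / (N ^ 2 * 3)) +
          ENNReal.ofReal (K ^ 2 / (N ^ 2 * 3)) := by
        rw [lintegral_add_left (by fun_prop), lintegral_add_left (by fun_prop), h₁, h₂, h₃]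
        norm_num
    _ = ENNReal.ofReal (K ^ 2 / N ^ 2) := by
        rw [← ENNReal.ofReal_add (by positivity) (by positivity),
          ← ENNReal.ofReal_add (by positivity) (by positivity)]
        congr 1
        field_simp
        ring

theorem lintegral_abs_Theta_le (n : ℕ) :
    ∫⁻ t in Hex, ENNReal.ofReal |Theta n t| ≤
      ENNReal.ofReal (64 * (n + 1) * (∫ y, decay y) ^ 2) := by
  set N : ℝ := n + 1
  have hN : 0 < N := by positivity
  calc ∫⁻ t in Hex, ENNReal.ofReal |Theta n t|
      ≤ ∫⁻ t in Hex, ENNReal.ofReal ((4 * N) ^ 3) * ENNReal.ofReal (thetaMajorant N t) :=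
        setLIntegral_mono (by unfold thetaMajorant; fun_prop) fun t ht => by
          rw [← ENNReal.ofReal_mul (by positivity)]
          exact ENNReal.ofReal_le_ofReal (abs_Theta_le n ht)
    _ ≤ ENNReal.ofReal ((4 * N) ^ 3) * ∫⁻ t, ENNReal.ofReal (thetaMajorant N t) := by
        rw [lintegral_const_mul _ (by unfold thetaMajorant; fun_prop)]
        exact mul_le_mul_right (setLIntegral_le_lintegral _ _) _
    _ ≤ ENNReal.ofReal ((4 * N) ^ 3) * ENNReal.ofReal ((∫ y, decay y) ^ 2 / N ^ 2) := by
        gcongr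
        exact lintegral_thetaMajorant_le hN.ne'
    _ = ENNReal.ofReal (64 * N * (∫ y, decay y) ^ 2) := by
        rw [← ENNReal.ofReal_mul (by positivity)]
        congr 1
        field_simp
        ring

/-- `∫_Ω |Θ_n(t)| dt ≤ c n` for an absolute constant `c > 0`. -/
theorem stmt7 :
    ∃ c : ℝ, 0 < c ∧ ∀ n : ℕ, 1 ≤ n → (∫ t in Hex, |Theta n t|) ≤ c * n := by
  refine ⟨128 * (∫ y, decay y) ^ 2, by have := integral_decay_pos; positivity, fun n hn => ?_⟩
  rw [integral_eq_lintegral_of_nonneg_ae (ae_of_all _ fun _ => abs_nonneg _)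
    (measurable_Theta n).abs.aestronglyMeasurable]
  refine ENNReal.toReal_le_of_le_ofReal (by positivity)
    ((lintegral_abs_Theta_le n).trans (ENNReal.ofReal_le_ofReal ?_))
  have hn' : (1 : ℝ) ≤ n := by exact_mod_cast hn
  nlinarith [sq_nonneg (∫ y, decay y)]
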